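/- Let T(a,b) be the full b-ary tree of depth a-1 and let H(a,b) be the hypergraph on V(T(a,b)) whose hyperedges are the sets of children of non-leaf vertices and the vertex sets of maximal root-to-leaf paths. If 3 ≤ a ≤ b, then H(a,b) is not (a+2)-interlacing with respect to any depth-first-search order on T(a,b). -/

import Mathlib

/-- The vertex set of the full b-ary tree `T(a,b)` of depth `a-1`:
vertices are addresses, i.e. lists over `Fin b` of length `< a`. -/
def TreeVert (a b : ℕ) : Type := {l : List (Fin b) // l.length < a}

instance (a b : ℕ) : DecidableEq (TreeVert a b) := by
  unfold TreeVert; infer_instance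

/-- The maximal chain through a vertex: the set of all its prefixes
(for a leaf, this is the whole root-to-leaf path). -/
def chainOf {a b : ℕ} (m : TreeVert a b) : Finset (TreeVert a b) :=
  (Finset.range (m.1.length + 1)).image fun i =>
    ⟨m.1.take i, by rw [List.length_take]; exact lt_of_le_of_lt (min_le_right _ _) m.2⟩

/-- The hyperedges of the hypergraph `H(a,b)`: child-sets of non-leaf vertices and
vertex sets of maximal (root-to-leaf) chains of `T(a,b)`. -/
def HabEdges (a b : ℕ) : Set (Finset (TreeVert a b)) :=
  {e | (∃ l : List (Fin b), ∃ h : l.length + 1 < a,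
          e = Finset.univ.image fun j : Fin b =>
            (⟨l ++ [j], by simpa using h⟩ : TreeVert a b)) ∨
       (∃ leaf : TreeVert a b, leaf.1.length = a - 1 ∧ e = chainOf leaf)}

/-!
In a DFS order, if `x ≺ y ≺ z` and `x` is an ancestor of `z`, then `x` is an ancestor of `y`.
Apply this to three consecutive vertices `x ≺ y ≺ z` of an interlacing sequence, where `x` and `z`
lie in a common hyperedge. If that hyperedge is a chain, `x` is a proper ancestor of `y`, so `y` is
deeper than `x`; if it is the set of children of `p`, then `p` is a proper ancestor of `y`.

If both hyperedges are chains, the depths of `v₀ ≺ ⋯ ≺ v_a` strictly increase, which is impossible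
in a tree of depth `a - 1`. If one is the set of children of `p` and the other a chain, four
consecutive vertices give `depth p < depth y < depth p + 1` for the second of them, `y`. If they
are the sets of children of `p` and of `q`, then `p` and `q` are ancestors of children of each
other, which forces `p = q`.
-/

structure IsDFSOrder {a b : ℕ} (lt : TreeVert a b → TreeVert a b → Prop) : Prop where
  irrefl : ∀ u, ¬ lt u u
  trans : ∀ u v w, lt u v → lt v w → lt u w
  lt_of_prefix : ∀ u v : TreeVert a b, u.1 <+: v.1 → u ≠ v → lt u v
  prefix_of_not_lt_of_not_lt :
    ∀ u v w : TreeVert a b, u.1 <+: w.1 → ¬ lt v u → ¬ lt w v → u.1 <+: v.1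

def IsInterlacing {V : Type*} (lt : V → V → Prop) (e f : Finset V) {n : ℕ} (v : Fin n → V) :
    Prop :=
  (∀ i j, i < j → lt (v i) (v j)) ∧
    ∀ i : Fin n, (Even (i : ℕ) → v i ∈ e) ∧ (¬ Even (i : ℕ) → v i ∈ f)

namespace IsInterlacing

variable {V : Type*} {lt : V → V → Prop} {e f : Finset V} {n : ℕ}

theorem comp_castLE {v : Fin n → V} (h : IsInterlacing lt e f v) {m : ℕ} (hmn : m ≤ n) :
    IsInterlacing lt e f (v ∘ Fin.castLE hmn) :=
  ⟨fun _ _ hij => h.1 _ _ ((Fin.castLE_lt_castLE_iff hmn).2 hij),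
    fun i => by simpa using h.2 (Fin.castLE hmn i)⟩

theorem tail {v : Fin (n + 1) → V} (h : IsInterlacing lt e f v) :
    IsInterlacing lt f e (Fin.tail v) :=
  ⟨fun _ _ hij => h.1 _ _ (Fin.succ_lt_succ_iff.2 hij), fun i => by
    simpa [Fin.tail, Nat.even_add_one, and_comm] using h.2 i.succ⟩

theorem mem_and_mem {v : Fin (n + 2) → V} (h : IsInterlacing lt e f v) (i : Fin n) :
    (v i.castSucc.castSucc ∈ e ∧ v i.succ.succ ∈ e) ∨
      (v i.castSucc.castSucc ∈ f ∧ v i.succ.succ ∈ f) := by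
  have h₀ := h.2 i.castSucc.castSucc
  have h₂ := h.2 i.succ.succ
  simp only [Fin.val_castSucc, Fin.val_succ, Nat.even_add_one, not_not] at h₀ h₂
  by_cases hi : Even (i : ℕ)
  · exact .inl ⟨h₀.1 hi, h₂.1 hi⟩
  · exact .inr ⟨h₀.2 hi, h₂.2 hi⟩

end IsInterlacing

namespace TreeVert

variable {a b : ℕ}

def children (l : List (Fin b)) (h : l.length + 1 < a) : Finset (TreeVert a b) :=
  Finset.univ.image fun j : Fin b => (⟨l ++ [j], by simpa using h⟩ : TreeVert a b)

theorem exists_eq_append_of_mem_children {l : List (Fin b)} {h : l.length + 1 < a}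
    {x : TreeVert a b} (hx : x ∈ children l h) : ∃ j, x.1 = l ++ [j] := by
  obtain ⟨j, -, rfl⟩ := Finset.mem_image.1 hx
  exact ⟨j, rfl⟩

theorem length_of_mem_children {l : List (Fin b)} {h : l.length + 1 < a}
    {x : TreeVert a b} (hx : x ∈ children l h) : x.1.length = l.length + 1 := by
  obtain ⟨j, hj⟩ := exists_eq_append_of_mem_children hx
  simp [hj]

theorem mem_habEdges {e : Finset (TreeVert a b)} :
    e ∈ HabEdges a b ↔
      (∃ l h, e = children l h) ∨ ∃ m : TreeVert a b, m.1.length = a - 1 ∧ e = chainOf m :=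
  Iff.rfl

theorem prefix_of_mem_chainOf {x m : TreeVert a b} (hx : x ∈ chainOf m) : x.1 <+: m.1 := by
  obtain ⟨i, -, rfl⟩ := Finset.mem_image.1 hx
  exact List.take_prefix _ _

theorem length_lt_of_prefix_of_ne {u v : TreeVert a b} (h : u.1 <+: v.1) (hne : u ≠ v) :
    u.1.length < v.1.length :=
  h.length_le.lt_of_ne fun hlen => hne (Subtype.ext (h.eq_of_length hlen))

end TreeVert

open TreeVert

namespace IsDFSOrder

variable {a b : ℕ} {lt : TreeVert a b → TreeVert a b → Prop} {u v w : TreeVert a b}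

theorem asymm (hlt : IsDFSOrder lt) (huv : lt u v) : ¬ lt v u :=
  fun hvu => hlt.irrefl u (hlt.trans _ _ _ huv hvu)

theorem ne (hlt : IsDFSOrder lt) (huv : lt u v) : u ≠ v := by
  rintro rfl
  exact hlt.irrefl u huv

theorem prefix_of_lt_of_lt (hlt : IsDFSOrder lt) (huw : u.1 <+: w.1) (huv : lt u v)
    (hvw : lt v w) : u.1 <+: v.1 :=
  hlt.prefix_of_not_lt_of_not_lt u v w huw (hlt.asymm huv) (hlt.asymm hvw)

theorem length_lt_of_lt_of_lt (hlt : IsDFSOrder lt) (huw : u.1 <+: w.1) (huv : lt u v)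
    (hvw : lt v w) : u.1.length < v.1.length :=
  length_lt_of_prefix_of_ne (hlt.prefix_of_lt_of_lt huw huv hvw) (hlt.ne huv)

theorem prefix_of_mem_chainOf (hlt : IsDFSOrder lt) {m : TreeVert a b} (hu : u ∈ chainOf m)
    (hv : v ∈ chainOf m) (huv : lt u v) : u.1 <+: v.1 := by
  refine (List.prefix_or_prefix_of_prefix (TreeVert.prefix_of_mem_chainOf hu)
    (TreeVert.prefix_of_mem_chainOf hv)).resolve_right fun hvu => ?_
  exact hlt.asymm huv (hlt.lt_of_prefix v u hvu (hlt.ne huv).symm)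

theorem length_lt_of_mem_chainOf (hlt : IsDFSOrder lt) {m : TreeVert a b} (hu : u ∈ chainOf m)
    (hw : w ∈ chainOf m) (huv : lt u v) (hvw : lt v w) : u.1.length < v.1.length :=
  hlt.length_lt_of_lt_of_lt (hlt.prefix_of_mem_chainOf hu hw (hlt.trans _ _ _ huv hvw)) huv hvw

theorem prefix_of_mem_children (hlt : IsDFSOrder lt) {l : List (Fin b)} {h : l.length + 1 < a}
    (hu : u ∈ children l h) (hw : w ∈ children l h) (huv : lt u v) (hvw : lt v w) :
    l <+: v.1 ∧ l.length < v.1.length := by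
  let p : TreeVert a b := ⟨l, by omega⟩
  have hpu : lt p u := by
    obtain ⟨j, hj⟩ := exists_eq_append_of_mem_children hu
    refine hlt.lt_of_prefix p u (hj ▸ List.prefix_append _ _) fun hpu => ?_
    simpa [p, hj] using congrArg (fun x : TreeVert a b => x.1.length) hpu
  have hpw : p.1 <+: w.1 := by
    obtain ⟨j, hj⟩ := exists_eq_append_of_mem_children hw
    exact hj ▸ List.prefix_append _ _
  have hpv : lt p v := hlt.trans _ _ _ hpu huv
  exact ⟨hlt.prefix_of_lt_of_lt hpw hpv hvw, hlt.length_lt_of_lt_of_lt hpw hpv hvw⟩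

theorem eq_of_isInterlacing_children (hlt : IsDFSOrder lt) {p q : List (Fin b)}
    {hp : p.length + 1 < a} {hq : q.length + 1 < a} {v : Fin 4 → TreeVert a b}
    (h : IsInterlacing lt (children p hp) (children q hq) v) : p = q := by
  obtain ⟨hpv₁, hp_lt⟩ := hlt.prefix_of_mem_children ((h.2 0).1 (by decide))
    ((h.2 2).1 (by decide)) (h.1 0 1 (by decide)) (h.1 1 2 (by decide))
  have hq_lt := (hlt.prefix_of_mem_children ((h.2 1).2 (by decide))
    ((h.2 3).2 (by decide)) (h.1 1 2 (by decide)) (h.1 2 3 (by decide))).2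
  have hv₁ := length_of_mem_children ((h.2 1).2 (by decide))
  have hv₂ := length_of_mem_children ((h.2 2).1 (by decide))
  obtain ⟨j, hj⟩ := exists_eq_append_of_mem_children ((h.2 1).2 (by decide))
  rw [hj] at hpv₁
  rcases List.prefix_concat_iff.1 hpv₁ with hpq | hpq
  · have hlen := congrArg List.length hpq
    simp only [List.length_append, List.length_singleton] at hlen
    omega
  · exact hpq.eq_of_length (by omega)

theorem not_isInterlacing_children_chainOf (hlt : IsDFSOrder lt) {p : List (Fin b)}
    {hp : p.length + 1 < a} {m : TreeVert a b} (v : Fin 4 → TreeVert a b) :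
    ¬ IsInterlacing lt (children p hp) (chainOf m) v := by
  intro h
  have hp_lt := (hlt.prefix_of_mem_children ((h.2 0).1 (by decide))
    ((h.2 2).1 (by decide)) (h.1 0 1 (by decide)) (h.1 1 2 (by decide))).2
  have hv₁_lt := hlt.length_lt_of_mem_chainOf ((h.2 1).2 (by decide))
    ((h.2 3).2 (by decide)) (h.1 1 2 (by decide)) (h.1 2 3 (by decide))
  have hv₂ := length_of_mem_children ((h.2 2).1 (by decide))
  omega

theorem not_isInterlacing_chainOf (hlt : IsDFSOrder lt) {m₁ m₂ : TreeVert a b}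
    (v : Fin (a + 2) → TreeVert a b) : ¬ IsInterlacing lt (chainOf m₁) (chainOf m₂) v := by
  intro h
  have hmono : StrictMono fun i : Fin (a + 1) => (v i.castSucc).1.length := by
    refine Fin.strictMono_iff_lt_succ.2 fun i => ?_
    have h₁ : lt (v i.castSucc.castSucc) (v i.succ.castSucc) :=
      h.1 _ _ (Fin.castSucc_lt_castSucc_iff.2 Fin.castSucc_lt_succ)
    have h₂ : lt (v i.succ.castSucc) (v i.succ.succ) := h.1 _ _ Fin.castSucc_lt_succ
    rcases h.mem_and_mem i with ⟨hx, hz⟩ | ⟨hx, hz⟩ <;>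
      exact hlt.length_lt_of_mem_chainOf hx hz h₁ h₂
  have := Fintype.card_le_of_injective (fun i => (⟨_, (v (Fin.castSucc i)).2⟩ : Fin a))
    fun i j hij => hmono.injective (congrArg Fin.val hij)
  simp at this

end IsDFSOrder

theorem stmt_6_general (a b : ℕ) (ha : 3 ≤ a)
    (lt : TreeVert a b → TreeVert a b → Prop)
    (hirr : ∀ u, ¬ lt u u)
    (htrans : ∀ u v w, lt u v → lt v w → lt u w)
    (hdfs₁ : ∀ u v : TreeVert a b, u.1 <+: v.1 → u ≠ v → lt u v)
    (hdfs₂ : ∀ u v w : TreeVert a b, u.1 <+: w.1 → ¬ lt v u → ¬ lt w v → u.1 <+: v.1) :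
    ¬ ∃ e₁ ∈ HabEdges a b, ∃ e₂ ∈ HabEdges a b, e₁ ≠ e₂ ∧
        ∃ v : Fin (a + 2) → TreeVert a b,
          (∀ i j : Fin (a + 2), i < j → lt (v i) (v j)) ∧
          ∀ i : Fin (a + 2), (Even (i : ℕ) → v i ∈ e₁) ∧ (¬ Even (i : ℕ) → v i ∈ e₂) := by
  rintro ⟨e₁, he₁, e₂, he₂, hne, v, hv⟩
  have hlt : IsDFSOrder lt := ⟨hirr, htrans, hdfs₁, hdfs₂⟩
  have hv : IsInterlacing lt e₁ e₂ v := hv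
  rcases mem_habEdges.1 he₁ with ⟨p, hp, rfl⟩ | ⟨m₁, -, rfl⟩ <;>
    rcases mem_habEdges.1 he₂ with ⟨q, hq, rfl⟩ | ⟨m₂, -, rfl⟩
  · obtain rfl := hlt.eq_of_isInterlacing_children (hv.comp_castLE (by omega : 4 ≤ a + 2))
    exact hne rfl
  · exact hlt.not_isInterlacing_children_chainOf _ (hv.comp_castLE (by omega))
  · exact hlt.not_isInterlacing_children_chainOf _ (hv.tail.comp_castLE (by omega))
  · exact hlt.not_isInterlacing_chainOf v hv

/-- For `3 ≤ a ≤ b`, the hypergraph `H(a,b)` is not `(a+2)`-interlacing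
with respect to any DFS order on `T(a,b)`. A DFS order is a strict total order `lt`
in which each vertex precedes all of its descendants and the descendants of each
vertex form an interval. -/
theorem stmt_6 (a b : ℕ) (ha : 3 ≤ a) (hab : a ≤ b)
    (lt : TreeVert a b → TreeVert a b → Prop)
    (htri : ∀ u v, lt u v ∨ u = v ∨ lt v u)
    (hirr : ∀ u, ¬ lt u u)
    (htrans : ∀ u v w, lt u v → lt v w → lt u w)
    (hdfs₁ : ∀ u v : TreeVert a b, u.1 <+: v.1 → u ≠ v → lt u v)
    (hdfs₂ : ∀ u v w : TreeVert a b, u.1 <+: w.1 → ¬ lt v u → ¬ lt w v → u.1 <+: v.1) :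
    ¬ ∃ e₁ ∈ HabEdges a b, ∃ e₂ ∈ HabEdges a b, e₁ ≠ e₂ ∧
        ∃ v : Fin (a + 2) → TreeVert a b,
          (∀ i j : Fin (a + 2), i < j → lt (v i) (v j)) ∧
          ∀ i : Fin (a + 2), (Even (i : ℕ) → v i ∈ e₁) ∧ (¬ Even (i : ℕ) → v i ∈ e₂) :=
  stmt_6_general a b ha lt hirr htrans hdfs₁ hdfs₂
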